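/- arXiv:1601.01128 — 2 statements merged into one kernel-verified Lean document; each statement's English description precedes it below -/
import Mathlib

section
/- Let P = S e^{rT} Φ(d₁) − K Φ(d₂) and P̂_m = S e^{rT} Φ(d₁^{(m)}) − K Φ(d₂^{(m)}), where d₁, d₂ (resp. d₁^{(m)}, d₂^{(m)}) are the Black–Scholes arguments computed with volatility σ̄ (resp. σ̄_m), both bounded below by c > 0. Then |P − P̂_m| ≤ (1/√(2π)) ( S e^{rT} + K ) ( |ln(S/K)+rT|/(c²√T) + √T/2 ) |σ̄ − σ̄_m|. -/
open Real MeasureTheory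

set_option maxHeartbeats 1000000 in
/-- Pointwise bound on the difference between the Black–Scholes prices computed with
volatilities σ̄ and σ̄_m, both bounded below by c > 0. -/
theorem bs_price_diff_bound
    (Φ : ℝ → ℝ)
    (hΦ : ∀ x, Φ x = (Real.sqrt (2 * π))⁻¹ * ∫ t in Set.Iic x, Real.exp (-t ^ 2 / 2))
    (S K T r c σ σm : ℝ) (hS : 0 < S) (hK : 0 < K) (hT : 0 < T) (hr : 0 ≤ r)
    (hc : 0 < c) (hσ : c ≤ σ) (hσm : c ≤ σm)
    (d₁ d₂ d₁m d₂m P Pm : ℝ)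
    (hd₁ : d₁ = (Real.log S + (r + σ ^ 2 / 2) * T - Real.log K) / (σ * Real.sqrt T))
    (hd₂ : d₂ = (Real.log S + (r - σ ^ 2 / 2) * T - Real.log K) / (σ * Real.sqrt T))
    (hd₁m : d₁m = (Real.log S + (r + σm ^ 2 / 2) * T - Real.log K) / (σm * Real.sqrt T))
    (hd₂m : d₂m = (Real.log S + (r - σm ^ 2 / 2) * T - Real.log K) / (σm * Real.sqrt T))
    (hP : P = S * Real.exp (r * T) * Φ d₁ - K * Φ d₂)
    (hPm : Pm = S * Real.exp (r * T) * Φ d₁m - K * Φ d₂m) :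
    |P - Pm| ≤ (Real.sqrt (2 * π))⁻¹ * (S * Real.exp (r * T) + K) *
      (|Real.log (S / K) + r * T| / (c ^ 2 * Real.sqrt T) + Real.sqrt T / 2) * |σ - σm| := by
  have hπ : (0:ℝ) < Real.sqrt (2 * π) := Real.sqrt_pos.2 (by positivity)
  have hπinv : (0:ℝ) ≤ (Real.sqrt (2 * π))⁻¹ := by positivity
  -- Lipschitz property of Φ
  have hint : Integrable (fun t : ℝ => Real.exp (-t ^ 2 / 2)) := by
    have h := integrable_exp_neg_mul_sq (b := 1/2) (by norm_num)
    refine h.congr (Filter.Eventually.of_forall fun t => ?_)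
    ring_nf
  have key : ∀ x y : ℝ, |Φ x - Φ y| ≤ (Real.sqrt (2 * π))⁻¹ * |x - y| := by
    intro x y
    rw [hΦ x, hΦ y, ← mul_sub,
      intervalIntegral.integral_Iic_sub_Iic hint.integrableOn hint.integrableOn,
      abs_mul, abs_of_nonneg hπinv]
    refine mul_le_mul_of_nonneg_left ?_ hπinv
    have := intervalIntegral.norm_integral_le_of_norm_le_const
      (C := 1) (f := fun t : ℝ => Real.exp (-t ^ 2 / 2)) (a := y) (b := x)
      (fun t _ => by
        rw [Real.norm_eq_abs, abs_of_nonneg (Real.exp_nonneg _)]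
        exact Real.exp_le_one_iff.2 (by nlinarith [sq_nonneg t]))
    simpa using this
  -- abbreviate √T as s
  set s : ℝ := Real.sqrt T with hsdef
  have hs : (0:ℝ) < s := Real.sqrt_pos.2 hT
  have hss : s * s = T := Real.mul_self_sqrt hT.le
  have hσ0 : (0:ℝ) < σ := hc.trans_le hσ
  have hσm0 : (0:ℝ) < σm := hc.trans_le hσm
  set A : ℝ := Real.log S - Real.log K + r * T with hA
  have hAlog : |Real.log (S / K) + r * T| = |A| := by
    rw [Real.log_div hS.ne' hK.ne']
  set B : ℝ := |A| / (c ^ 2 * s) + s / 2 with hB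
  have hB0 : 0 ≤ B := by positivity
  -- bound on the difference of d's
  have dbound : ∀ ε : ℝ, |ε| = 1 →
      |A / (σ * s) + ε * (σ * (s / 2))
        - (A / (σm * s) + ε * (σm * (s / 2)))| ≤ B * |σ - σm| := by
    intro ε hε
    have heq : A / (σ * s) + ε * (σ * (s / 2))
        - (A / (σm * s) + ε * (σm * (s / 2)))
        = A * (σm - σ) / (σ * σm * s) + ε * ((σ - σm) * (s / 2)) := by
      field_simp
      ring
    rw [heq]
    refine (abs_add_le _ _).trans ?_
    have h1 : |A * (σm - σ) / (σ * σm * s)| ≤ |A| / (c ^ 2 * s) * |σ - σm| := by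
      rw [abs_div, abs_mul, abs_sub_comm σm σ]
      rw [div_le_iff₀ (by positivity)]
      have hc2 : c ^ 2 * s ≤ |σ * σm * s| := by
        rw [abs_of_nonneg (by positivity)]
        have : c ^ 2 ≤ σ * σm := by nlinarith
        exact mul_le_mul_of_nonneg_right this hs.le
      calc |A| * |σ - σm| = |A| / (c ^ 2 * s) * |σ - σm| * (c ^ 2 * s) := by
            field_simp
        _ ≤ |A| / (c ^ 2 * s) * |σ - σm| * |σ * σm * s| :=
            mul_le_mul_of_nonneg_left hc2 (by positivity)
    have h2 : |ε * ((σ - σm) * (s / 2))| ≤ s / 2 * |σ - σm| := by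
      rw [abs_mul, hε, one_mul, abs_mul,
        abs_of_nonneg (by positivity : (0:ℝ) ≤ s / 2), mul_comm]
    calc _ ≤ |A| / (c ^ 2 * s) * |σ - σm| + s / 2 * |σ - σm| := add_le_add h1 h2
      _ = B * |σ - σm| := by rw [hB]; ring
  -- rewrite the d's in the convenient form
  have hT' : T = s * s := hss.symm
  have hd₁' : d₁ = A / (σ * s) + 1 * (σ * (s / 2)) := by
    rw [hd₁, hA, hT']; field_simp; ring
  have hd₁m' : d₁m = A / (σm * s) + 1 * (σm * (s / 2)) := by
    rw [hd₁m, hA, hT']; field_simp; ring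
  have hd₂' : d₂ = A / (σ * s) + (-1) * (σ * (s / 2)) := by
    rw [hd₂, hA, hT']; field_simp; ring
  have hd₂m' : d₂m = A / (σm * s) + (-1) * (σm * (s / 2)) := by
    rw [hd₂m, hA, hT']; field_simp; ring
  have hb1 : |d₁ - d₁m| ≤ B * |σ - σm| := by
    rw [hd₁', hd₁m']; exact dbound 1 (by norm_num)
  have hb2 : |d₂ - d₂m| ≤ B * |σ - σm| := by
    rw [hd₂', hd₂m']; exact dbound (-1) (by norm_num)
  -- combine
  have hSe : (0:ℝ) ≤ S * Real.exp (r * T) := by positivity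
  calc |P - Pm|
      = |S * Real.exp (r * T) * (Φ d₁ - Φ d₁m) + (-(K * (Φ d₂ - Φ d₂m)))| := by
        rw [hP, hPm]; ring_nf
    _ ≤ S * Real.exp (r * T) * |Φ d₁ - Φ d₁m| + K * |Φ d₂ - Φ d₂m| := by
        refine (abs_add_le _ _).trans ?_
        rw [abs_neg, abs_mul (S * Real.exp (r * T)), abs_mul K,
          abs_of_nonneg hSe, abs_of_nonneg hK.le]
    _ ≤ S * Real.exp (r * T) * ((Real.sqrt (2 * π))⁻¹ * |d₁ - d₁m|)
        + K * ((Real.sqrt (2 * π))⁻¹ * |d₂ - d₂m|) := by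
        gcongr <;> [exact key d₁ d₁m; exact key d₂ d₂m]
    _ ≤ S * Real.exp (r * T) * ((Real.sqrt (2 * π))⁻¹ * (B * |σ - σm|))
        + K * ((Real.sqrt (2 * π))⁻¹ * (B * |σ - σm|)) := by
        gcongr
    _ = (Real.sqrt (2 * π))⁻¹ * (S * Real.exp (r * T) + K) * B * |σ - σm| := by ring
    _ = _ := by rw [hB, hAlog]
end

section
/- If ln X is normally distributed with mean μ₀ and variance v² > 0, then E[(X − K)⁺] = e^{μ₀ + v²/2} Φ((μ₀ + v² − ln K)/v) − K Φ((μ₀ − ln K)/v) for any K > 0. -/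
/-!
Write `Y = log X ∼ 𝒩(μ₀, v²)` and `a = log K`, so that `(X - K)⁺ = (exp Y - K) 𝟙{Y > a}`.
The term `K ℙ(Y > a)` is a Gaussian tail, `K Φ((μ₀ - a) / v)`. For the other term, tilting
`𝒩(m, v²)` by `exp` gives `𝒩(m + v², v²)`, with normalising constant the moment generating
function at `1`, `exp (m + v² / 2)`;
hence `𝔼[exp Y; Y > a] = exp (μ₀ + v² / 2) ℙ(𝒩(μ₀ + v², v²) > a)`, again a Gaussian tail.
-/

open MeasureTheory Real ProbabilityTheory
open scoped NNReal

lemma setIntegral_exp_eq_mul_tilted {α : Type*} [MeasurableSpace α] (μ : Measure α) [SFinite μ]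
    {f : α → ℝ} (hf : Integrable (fun x => exp (f x)) μ) (s : Set α) :
    ∫ x in s, exp (f x) ∂μ = (∫ x, exp (f x) ∂μ) * (μ.tilted f).real s := by
  rcases eq_zero_or_neZero μ with rfl | hμ
  · simp
  have hZ : 0 < ∫ x, exp (f x) ∂μ := integral_exp_pos hf
  have h := setIntegral_tilted f (fun _ => (1 : ℝ)) s (μ := μ)
  simp only [smul_eq_mul, mul_one, integral_div, setIntegral_const] at h
  rw [h, mul_div_cancel₀ _ hZ.ne']

lemma integral_max_exp_sub_const (μ : Measure ℝ) [IsFiniteMeasure μ]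
    (hexp : Integrable exp μ) {K : ℝ} (hK : 0 < K) :
    ∫ y, max (exp y - K) 0 ∂μ
      = ∫ y in Set.Ioi (log K), exp y ∂μ - K * μ.real (Set.Ioi (log K)) := by
  have hind : (fun y => max (exp y - K) 0) = (Set.Ioi (log K)).indicator (exp · - K) := by
    ext y
    by_cases hy : log K < y
    · have hKy : K < exp y := by simpa [exp_log hK] using exp_lt_exp.2 hy
      simp [Set.indicator_of_mem (Set.mem_Ioi.2 hy), hKy.le]
    · have hyK : exp y ≤ K := by simpa [exp_log hK] using exp_le_exp.2 (not_lt.1 hy)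
      simp [Set.indicator_of_notMem (show y ∉ Set.Ioi (log K) from hy), hyK]
  rw [hind, integral_indicator measurableSet_Ioi,
    integral_sub hexp.integrableOn (integrable_const K), setIntegral_const, smul_eq_mul, mul_comm]

section ExponentialTilt

variable (m : ℝ) (v : ℝ≥0)

lemma exp_mul_gaussianPDFReal (y : ℝ) :
    exp y * gaussianPDFReal m v y = exp (m + v / 2) * gaussianPDFReal (m + v) v y := by
  rcases eq_or_ne v 0 with rfl | hv
  · simp [gaussianPDFReal_zero_var]
  have hv' : (v : ℝ) ≠ 0 := by exact_mod_cast hv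
  simp only [gaussianPDFReal]
  rw [mul_left_comm, mul_left_comm (exp _), ← exp_add, ← exp_add]
  congr 2
  field_simp
  ring

lemma integrable_exp_gaussianReal : Integrable exp (gaussianReal m v) := by
  simpa using integrable_exp_mul_gaussianReal (μ := m) (v := v) 1

lemma integral_exp_gaussianReal : ∫ x, exp x ∂gaussianReal m v = exp (m + v / 2) := by
  simpa [mgf] using congrFun (mgf_id_gaussianReal (μ := m) (v := v)) 1

lemma gaussianReal_tilted_id : (gaussianReal m v).tilted id = gaussianReal (m + v) v := by
  rcases eq_or_ne v 0 with rfl | hv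
  · have hconst : (id : ℝ → ℝ) =ᵐ[gaussianReal m 0] fun _ => m := by
      simp [gaussianReal_zero_var, Filter.EventuallyEq]
    rw [tilted_congr hconst, tilted_const, NNReal.coe_zero, add_zero]
  simp only [Measure.tilted, id_eq]
  rw [integral_exp_gaussianReal, gaussianReal_of_var_ne_zero _ hv,
    gaussianReal_of_var_ne_zero _ hv,
    ← withDensity_mul _ (measurable_gaussianPDF m v) (by fun_prop)]
  congr with y
  simp only [Pi.mul_apply, gaussianPDF, ← ENNReal.ofReal_mul (gaussianPDFReal_nonneg m v y)]
  rw [mul_div_assoc', mul_comm, exp_mul_gaussianPDFReal, mul_div_cancel_left₀ _ (exp_pos _).ne']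

lemma setIntegral_exp_gaussianReal (s : Set ℝ) :
    ∫ x in s, exp x ∂gaussianReal m v = exp (m + v / 2) * (gaussianReal (m + v) v).real s := by
  have h := setIntegral_exp_eq_mul_tilted (gaussianReal m v) (f := id)
    (integrable_exp_gaussianReal m v) s
  rw [gaussianReal_tilted_id] at h
  simpa only [id_eq, integral_exp_gaussianReal] using h

end ExponentialTilt

lemma gaussianReal_zero_one_real_Iio (x : ℝ) :
    (gaussianReal 0 1).real (Set.Iio x) = (√(2 * π))⁻¹ * ∫ t in Set.Iic x, exp (-t ^ 2 / 2) := by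
  rw [measureReal_def, gaussianReal_apply_eq_integral _ one_ne_zero,
    ENNReal.toReal_ofReal
      (setIntegral_nonneg measurableSet_Iio fun _ _ => gaussianPDFReal_nonneg _ _ _),
    integral_Iic_eq_integral_Iio, ← integral_const_mul]
  simp [gaussianPDFReal]

lemma gaussianReal_real_Ioi {σ : ℝ} (hσ : 0 < σ) (m a : ℝ) :
    (gaussianReal m (σ ^ 2).toNNReal).real (Set.Ioi a)
      = (gaussianReal 0 1).real (Set.Iio ((m - a) / σ)) := by
  have hmap : (gaussianReal 0 1).map (fun x => m - σ * x) = gaussianReal m (σ ^ 2).toNNReal := by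
    have hcomp : (fun x => m - σ * x) = (m - ·) ∘ (σ * ·) := rfl
    rw [hcomp, ← Measure.map_map (by fun_prop) (by fun_prop), gaussianReal_map_const_mul,
      gaussianReal_map_const_sub]
    congr 1
    · ring
    · ext; simp [sq_nonneg]
  rw [← hmap, map_measureReal_apply (by fun_prop) measurableSet_Ioi]
  congr 1
  ext x
  simp only [Set.mem_preimage, Set.mem_Ioi, Set.mem_Iio, lt_div_iff₀ hσ]
  constructor <;> intro h <;> linarith

theorem lognormal_call_expectation_general
    {Ω : Type*} [MeasureSpace Ω]
    (Φ : ℝ → ℝ)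
    (hΦ : ∀ x, Φ x = (Real.sqrt (2 * π))⁻¹ * ∫ t in Set.Iic x, Real.exp (-t ^ 2 / 2))
    (X : Ω → ℝ) (hXpos : ∀ ω, 0 < X ω)
    (μ₀ v K : ℝ) (hv : 0 < v) (hK : 0 < K)
    (hlaw : Measure.map (fun ω => Real.log (X ω)) volume =
      gaussianReal μ₀ (Real.toNNReal (v ^ 2))) :
    ∫ ω, max (X ω - K) 0 =
      Real.exp (μ₀ + v ^ 2 / 2) * Φ ((μ₀ + v ^ 2 - Real.log K) / v) -
      K * Φ ((μ₀ - Real.log K) / v) := by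
  have hvar : ((v ^ 2).toNNReal : ℝ) = v ^ 2 := Real.coe_toNNReal _ (sq_nonneg v)
  have hlog : AEMeasurable (fun ω => log (X ω)) :=
    aemeasurable_of_map_neZero (by rw [hlaw]; infer_instance)
  have hpayoff : ∫ ω, max (X ω - K) 0
      = ∫ y, max (exp y - K) 0 ∂gaussianReal μ₀ (v ^ 2).toNNReal := by
    rw [← hlaw, integral_map hlog (by fun_prop)]
    simp only [exp_log (hXpos _)]
  rw [hpayoff, integral_max_exp_sub_const _ (integrable_exp_gaussianReal _ _) hK,
    setIntegral_exp_gaussianReal, gaussianReal_real_Ioi hv, gaussianReal_real_Ioi hv,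
    gaussianReal_zero_one_real_Iio, gaussianReal_zero_one_real_Iio, hvar, hΦ, hΦ]

/-- If ln X ~ N(μ₀, v²) with v > 0, then
E[(X − K)⁺] = e^{μ₀+v²/2}Φ((μ₀+v²−ln K)/v) − KΦ((μ₀−ln K)/v) for any K > 0. -/
theorem lognormal_call_expectation
    {Ω : Type*} [MeasureSpace Ω] [IsProbabilityMeasure (volume : Measure Ω)]
    (Φ : ℝ → ℝ)
    (hΦ : ∀ x, Φ x = (Real.sqrt (2 * π))⁻¹ * ∫ t in Set.Iic x, Real.exp (-t ^ 2 / 2))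
    (X : Ω → ℝ) (hXpos : ∀ ω, 0 < X ω)
    (μ₀ v K : ℝ) (hv : 0 < v) (hK : 0 < K)
    (hlaw : Measure.map (fun ω => Real.log (X ω)) volume =
      gaussianReal μ₀ (Real.toNNReal (v ^ 2))) :
    ∫ ω, max (X ω - K) 0 =
      Real.exp (μ₀ + v ^ 2 / 2) * Φ ((μ₀ + v ^ 2 - Real.log K) / v) -
      K * Φ ((μ₀ - Real.log K) / v) :=
  lognormal_call_expectation_general Φ hΦ X hXpos μ₀ v K hv hK hlaw
end
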